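/- Let H be a strongly primary monoid with Λ(H) = ∞, and let n = Ĥ \ Ĥ^×. Then every element of n has a power lying in m = H \ H^×, and consequently Ĥ is primary. -/

import Mathlib

open Pointwise

section MonoidDefs

variable {G : Type*} [CommGroup G]

/-- `x` is a unit of the submonoid `H`. -/
def IsHUnit (H : Submonoid G) (x : G) : Prop := x ∈ H ∧ x⁻¹ ∈ H

/-- The set of non-units of `H`. -/
def nonUnits (H : Submonoid G) : Set G := {x | x ∈ H ∧ x⁻¹ ∉ H}

/-- `u` is an atom (irreducible element) of `H`. -/
def IsHAtom (H : Submonoid G) (u : G) : Prop :=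
  u ∈ H ∧ ¬ IsHUnit H u ∧
    ∀ a b : G, a ∈ H → b ∈ H → u = a * b → IsHUnit H a ∨ IsHUnit H b

/-- `G` is the quotient group of `H`. -/
def IsQuotientGroup (H : Submonoid G) : Prop :=
  ∀ g : G, ∃ a ∈ H, ∃ b ∈ H, g = a / b

/-- `H` is a primary monoid. -/
def IsPrimaryMonoid (H : Submonoid G) : Prop :=
  (nonUnits H).Nonempty ∧
    ∀ a ∈ nonUnits H, ∀ b ∈ nonUnits H, ∃ n : ℕ, 0 < n ∧ b ^ n ∈ a • (H : Set G)

/-- `H` is a strongly primary monoid. -/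
def IsStronglyPrimary (H : Submonoid G) : Prop :=
  (nonUnits H).Nonempty ∧
    ∀ a ∈ nonUnits H, ∃ n : ℕ, 0 < n ∧ nonUnits H ^ n ⊆ a • (H : Set G)

/-- `x` and `y` are associated in `H`. -/
def HAssoc (H : Submonoid G) (x y : G) : Prop := IsHUnit H (x / y)

/-- The set of lengths of `a`: all `k` such that `a` is a product of `k` atoms
(up to a unit of `H`). -/
def lengthSet (H : Submonoid G) (a : G) : Set ℕ :=
  {k | ∃ s : Multiset G, Multiset.card s = k ∧ (∀ v ∈ s, IsHAtom H v) ∧ HAssoc H a s.prod}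

/-- `Λ(S)`, the supremum of the minimal factorization lengths of elements of `S`. -/
noncomputable def Lambda (H : Submonoid G) (S : Set G) : ℕ∞ :=
  ⨆ (a : G) (_ : a ∈ S) (_ : (lengthSet H a).Nonempty), ((sInf (lengthSet H a) : ℕ) : ℕ∞)

/-- `ρ_k(H)`, the supremum of `sup L(a)` over all `a` with `k ∈ L(a)`. -/
noncomputable def rho (H : Submonoid G) (k : ℕ∞) : ℕ∞ :=
  ⨆ (a : G) (_ : a ∈ H) (_ : ∃ n ∈ lengthSet H a, (n : ℕ∞) = k),
    ⨆ (n : ℕ) (_ : n ∈ lengthSet H a), (n : ℕ∞)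

/-- The elasticity `ρ(H) = sup { m/n : m, n ∈ L(a), a ∈ H }`. -/
noncomputable def elasticity (H : Submonoid G) : ENNReal :=
  ⨆ (a : G) (_ : a ∈ H) (m : ℕ) (_ : m ∈ lengthSet H a) (n : ℕ) (_ : n ∈ lengthSet H a),
    (m : ENNReal) / (n : ENNReal)

/-- `z` is a factorization of `a`: a multiset of atoms whose product is associated to `a`. -/
def IsFactorization (H : Submonoid G) (a : G) (z : Multiset G) : Prop :=
  (∀ v ∈ z, IsHAtom H v) ∧ HAssoc H a z.prod

/-- The distance between two factorizations: cancel a (maximal) common part (up to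
associates) and take the maximum of the lengths of the remaining parts. -/
noncomputable def fdist (H : Submonoid G) (z z' : Multiset G) : ℕ :=
  sInf {N : ℕ | ∃ x x' v w : Multiset G, z = x + v ∧ z' = x' + w ∧
    Multiset.Rel (HAssoc H) x x' ∧ max (Multiset.card v) (Multiset.card w) ≤ N}

/-- `N` is a tame bound for the atom `u`: for every multiple `a` of `u` and every
factorization `z` of `a` there is a factorization `z'` of `a` containing `u`
with `d(z, z') ≤ N`. -/
def TameBound (H : Submonoid G) (u : G) (N : ℕ) : Prop :=
  ∀ a ∈ H, (∃ b ∈ H, a = u * b) → ∀ z : Multiset G, IsFactorization H a z →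
    ∃ z' : Multiset G, IsFactorization H a z' ∧ (∃ v ∈ z', HAssoc H v u) ∧ fdist H z z' ≤ N

/-- `H` is locally tame: `t(u) < ∞` for every atom `u`. -/
def LocallyTame (H : Submonoid G) : Prop :=
  ∀ u : G, IsHAtom H u → ∃ N : ℕ, TameBound H u N

/-- `H` is globally tame: `sup { t(u) : u an atom } < ∞`. -/
def GloballyTame (H : Submonoid G) : Prop :=
  ∃ N : ℕ, ∀ u : G, IsHAtom H u → TameBound H u N

/-- The local tame degree `t(u)` of `u`. -/
noncomputable def tameDeg (H : Submonoid G) (u : G) : ℕ∞ :=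
  sInf {N : ℕ∞ | ∃ n : ℕ, TameBound H u n ∧ N = (n : ℕ∞)}

/-- `N` is an omega bound for `a`: whenever `a` divides a product of elements of `H`,
it divides a subproduct with at most `N` factors. -/
def OmegaBound (H : Submonoid G) (a : G) (N : ℕ) : Prop :=
  ∀ s : Multiset G, (∀ x ∈ s, x ∈ H) → (∃ c ∈ H, s.prod = a * c) →
    ∃ t : Multiset G, t ≤ s ∧ Multiset.card t ≤ N ∧ ∃ c ∈ H, t.prod = a * c

/-- The omega invariant `ω(a)`. -/
noncomputable def omegaDeg (H : Submonoid G) (a : G) : ℕ∞ :=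
  sInf {N : ℕ∞ | ∃ n : ℕ, OmegaBound H a n ∧ N = (n : ℕ∞)}

/-- `M(x)`: the smallest `n ≥ 1` with `mⁿ ⊆ xH`. -/
noncomputable def Mdeg (H : Submonoid G) (x : G) : ℕ :=
  sInf {n : ℕ | 0 < n ∧ nonUnits H ^ n ⊆ x • (H : Set G)}

/-- The complete integral closure `Ĥ` of `H` (inside the quotient group). -/
def hatH (H : Submonoid G) : Set G := {x | ∃ c ∈ H, ∀ n : ℕ, c * x ^ n ∈ H}

/-- The set of non-units of `Ĥ`. -/
def hatNonUnits (H : Submonoid G) : Set G := {x | x ∈ hatH H ∧ x⁻¹ ∉ hatH H}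

/-- The root closure `H̃` of `H`. -/
def tildeH (H : Submonoid G) : Set G := {x | ∃ n : ℕ, 0 < n ∧ x ^ n ∈ H}

/-- The set of non-units of `H̃`. -/
def tildeNonUnits (H : Submonoid G) : Set G := {x | x ∈ tildeH H ∧ x⁻¹ ∉ tildeH H}

/-- The seminormal closure `H'` of `H`. -/
def seminormalClosure (H : Submonoid G) : Set G :=
  {x | ∃ N : ℕ, ∀ n : ℕ, N ≤ n → x ^ n ∈ H}

/-- The conductor `(H : Ĥ)`. -/
def conductorH (H : Submonoid G) : Set G := {z | ∀ x ∈ hatH H, z * x ∈ H}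

/-- `Ĥ` is a primary monoid. -/
def HatPrimary (H : Submonoid G) : Prop :=
  (hatNonUnits H).Nonempty ∧
    ∀ a ∈ hatNonUnits H, ∀ b ∈ hatNonUnits H,
      ∃ n : ℕ, 0 < n ∧ ∃ c ∈ hatH H, b ^ n = a * c

/-- `Ĥ` is a valuation monoid. -/
def HatValuation (H : Submonoid G) : Prop :=
  ∀ a ∈ hatH H, ∀ b ∈ hatH H,
    (∃ c ∈ hatH H, b = a * c) ∨ (∃ c ∈ hatH H, a = b * c)

/-- `H` is atomic. -/
def Atomic (H : Submonoid G) : Prop :=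
  ∀ a ∈ nonUnits H, ∃ s : Multiset G, (∀ v ∈ s, IsHAtom H v) ∧ a = s.prod

/-- `H` is a discrete valuation monoid, i.e. `H_red ≅ (ℕ₀, +)`. -/
def IsDiscreteValuationMonoid (H : Submonoid G) : Prop :=
  ∃ p ∈ H, ¬ IsHUnit H p ∧ ∀ a ∈ H, ∃ n : ℕ, ∃ ε : G, IsHUnit H ε ∧ a = ε * p ^ n

end MonoidDefs

/-!
Let `x` be a non-unit of `Ĥ`, with `c * xⁿ ∈ H` for all `n`. If no positive power of `x` lay in
`H`, then `c` and `c * x` would be non-units of `H`, with `m ^ n₁ ⊆ cH` and `m ^ n₂ ⊆ cxH`. Every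
`y ∈ H` would then have a factorization of length at most `n₁ + n₂`: if `y ∉ cH`, then `y` is not
a product of more than `n₁` non-units; if `y = c * z`, take `j` maximal with `z * x⁻ʲ ∈ H` and
split `y = (c * xʲ) * (z * x⁻ʲ)`, where the first factor is not a product of more than `n₁`
non-units (it does not lie in `cH` unless `j = 0`) and the second not of more than `n₂` (it does
not lie in `cxH`, by maximality of `j`). This contradicts `Λ(H) = ∞`, so some `xᵏ` lies in `H`,
and even in `m` since `x` is not a unit of `Ĥ`. Primality of `Ĥ` then follows from primality of
`H`, applied to these powers.
-/

section NonUnits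

variable {G : Type*} [CommGroup G] {H : Submonoid G}

lemma mul_mem_nonUnits {y h : G} (hy : y ∈ nonUnits H) (hh : h ∈ H) : y * h ∈ nonUnits H :=
  ⟨mul_mem hy.1 hh, fun hyh => hy.2 <| by
    simpa [mul_comm] using mul_mem hyh hh⟩

lemma pow_nonUnits_subset (k : ℕ) : nonUnits H ^ k ⊆ H :=
  Submonoid.pow_subset fun _ hy => hy.1

lemma pow_succ_nonUnits_subset (k : ℕ) : nonUnits H ^ (k + 1) ⊆ nonUnits H := by
  rintro _ ⟨t, ht, v, hv, rfl⟩
  simpa [mul_comm] using mul_mem_nonUnits hv (pow_nonUnits_subset k ht)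

lemma multiset_prod_mem_pow_card {S : Set G} {s : Multiset G} (hs : ∀ v ∈ s, v ∈ S) :
    s.prod ∈ S ^ Multiset.card s := by
  induction s using Multiset.induction_on with
  | empty => simp
  | cons v s ih =>
    rw [Multiset.prod_cons, Multiset.card_cons, pow_succ, mul_comm v]
    exact Set.mul_mem_mul (ih fun w hw => hs w (Multiset.mem_cons_of_mem hw))
      (hs v (Multiset.mem_cons_self v s))

lemma pow_nonUnits_subset_smul_of_le {a : G} {n k : ℕ}
    (hn : nonUnits H ^ n ⊆ a • (H : Set G)) (hk : n ≤ k) :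
    nonUnits H ^ k ⊆ a • (H : Set G) := by
  obtain ⟨d, rfl⟩ := Nat.exists_eq_add_of_le hk
  rw [pow_add]
  rintro _ ⟨t, ht, u, hu, rfl⟩
  obtain ⟨h, hh, rfl⟩ := hn ht
  exact ⟨h * u, mul_mem hh (pow_nonUnits_subset d hu), by simp [mul_assoc]⟩

lemma le_of_mem_pow_of_notMem_smul {a y : G} {n k : ℕ}
    (hn : nonUnits H ^ n ⊆ a • (H : Set G)) (hy : y ∈ nonUnits H ^ k)
    (hya : y ∉ a • (H : Set G)) : k ≤ n := by
  by_contra! hnk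
  exact hya (pow_nonUnits_subset_smul_of_le hn hnk.le hy)

lemma le_of_self_mem_pow {a : G} {n k : ℕ} (hn : nonUnits H ^ n ⊆ a • (H : Set G))
    (hk : a ∈ nonUnits H ^ k) : k ≤ n := by
  by_contra! hnk
  obtain ⟨d, rfl⟩ := Nat.exists_eq_add_of_lt hnk
  rw [show n + d + 1 = d + 1 + n by omega, pow_add] at hk
  obtain ⟨t, ht, u, hu, htu : t * u = a⟩ := hk
  obtain ⟨h, hh, rfl : a * h = u⟩ := hn hu
  have hth : t * h = 1 := mul_left_cancel (a := a) (by rw [mul_one, mul_left_comm, htu])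
  exact (pow_succ_nonUnits_subset d ht).2 (inv_eq_of_mul_eq_one_right hth ▸ hh)

end NonUnits

section Lengths

variable {G : Type*} [CommGroup G] {H : Submonoid G}

lemma exists_mul_of_not_isHAtom {y : G} (hy : y ∈ nonUnits H) (hatom : ¬ IsHAtom H y) :
    ∃ a ∈ nonUnits H, ∃ b ∈ nonUnits H, y = a * b := by
  simp only [IsHAtom, hy.1, true_and, not_and, not_forall, not_or] at hatom
  obtain ⟨a, b, ha, hb, rfl, hau, hbu⟩ := hatom fun hu => hy.2 hu.2
  exact ⟨a, ⟨ha, fun h => hau ⟨ha, h⟩⟩, b, ⟨hb, fun h => hbu ⟨hb, h⟩⟩, rfl⟩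

lemma exists_atoms_prod_eq (N : ℕ) :
    ∀ y ∈ nonUnits H, (∀ k, y ∈ nonUnits H ^ k → k ≤ N) →
      ∃ s : Multiset G, (∀ v ∈ s, IsHAtom H v) ∧ s.prod = y := by
  induction N with
  | zero =>
    intro y hy hbound
    exact absurd (hbound 1 (by rwa [pow_one])) (by omega)
  | succ N ih =>
    intro y hy hbound
    by_cases hatom : IsHAtom H y
    · exact ⟨{y}, by simpa using hatom, by simp⟩
    obtain ⟨a, ha, b, hb, rfl⟩ := exists_mul_of_not_isHAtom hy hatom
    have hbound_a : ∀ k, a ∈ nonUnits H ^ k → k ≤ N := fun k hk =>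
      Nat.le_of_succ_le_succ (hbound (k + 1) (by rw [pow_succ]; exact Set.mul_mem_mul hk hb))
    have hbound_b : ∀ k, b ∈ nonUnits H ^ k → k ≤ N := fun k hk =>
      Nat.le_of_succ_le_succ
        (hbound (k + 1) (by rw [pow_succ, mul_comm a]; exact Set.mul_mem_mul hk ha))
    obtain ⟨sa, hsa, rfl⟩ := ih a ha hbound_a
    obtain ⟨sb, hsb, rfl⟩ := ih b hb hbound_b
    refine ⟨sa + sb, fun v hv => ?_, Multiset.prod_add sa sb⟩
    rcases Multiset.mem_add.mp hv with hv | hv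
    exacts [hsa v hv, hsb v hv]

lemma exists_mem_lengthSet_le {y : G} {N : ℕ} (hy : y ∈ H)
    (hbound : ∀ k, y ∈ nonUnits H ^ k → k ≤ N) : ∃ k ∈ lengthSet H y, k ≤ N := by
  by_cases hyu : y⁻¹ ∈ H
  · exact ⟨0, ⟨0, rfl, by simp, by simpa [HAssoc, IsHUnit] using ⟨hy, hyu⟩⟩, N.zero_le⟩
  obtain ⟨s, hs, rfl⟩ := exists_atoms_prod_eq N _ ⟨hy, hyu⟩ hbound
  refine ⟨_, ⟨s, rfl, hs, by simp [HAssoc, IsHUnit]⟩, hbound _ ?_⟩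
  exact multiset_prod_mem_pow_card fun v hv =>
    ⟨(hs v hv).1, fun h => (hs v hv).2.1 ⟨(hs v hv).1, h⟩⟩

lemma add_mem_lengthSet_mul {a b : G} {k l : ℕ} (hk : k ∈ lengthSet H a)
    (hl : l ∈ lengthSet H b) : k + l ∈ lengthSet H (a * b) := by
  obtain ⟨s, rfl, hs, hsu⟩ := hk
  obtain ⟨t, rfl, ht, htu⟩ := hl
  refine ⟨s + t, Multiset.card_add s t, fun v hv => ?_, ?_⟩
  · rcases Multiset.mem_add.mp hv with hv | hv
    exacts [hs v hv, ht v hv]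
  · rw [HAssoc, Multiset.prod_add, mul_div_mul_comm]
    exact ⟨mul_mem hsu.1 htu.1, by simpa [mul_comm] using mul_mem hsu.2 htu.2⟩

lemma Lambda_le {S : Set G} {N : ℕ} (h : ∀ y ∈ S, ∃ k ∈ lengthSet H y, k ≤ N) :
    Lambda H S ≤ N := by
  refine iSup₂_le fun y hy => iSup_le fun _ => ?_
  obtain ⟨k, hk, hkN⟩ := h y hy
  exact_mod_cast (Nat.sInf_le hk).trans hkN

end Lengths

section CompleteIntegralClosure

variable {G : Type*} [CommGroup G] {H : Submonoid G}

def hatSubmonoid (H : Submonoid G) : Submonoid G where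
  carrier := hatH H
  one_mem' := ⟨1, one_mem H, by simp⟩
  mul_mem' := by
    rintro x y ⟨c, hc, hcx⟩ ⟨d, hd, hdy⟩
    refine ⟨c * d, mul_mem hc hd, fun n => ?_⟩
    rw [mul_pow, mul_mul_mul_comm]
    exact mul_mem (hcx n) (hdy n)

lemma mem_hatH_of_mem {x : G} (hx : x ∈ H) : x ∈ hatH H :=
  ⟨1, one_mem H, fun n => by simpa using pow_mem hx n⟩

lemma inv_mem_hatH_of_inv_pow_mem {x : G} {j : ℕ} (hx : x ∈ hatH H) (hj : 0 < j)
    (hxj : x⁻¹ ^ j ∈ H) : x⁻¹ ∈ hatH H := by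
  obtain ⟨i, rfl⟩ := Nat.exists_eq_add_one_of_ne_zero hj.ne'
  have he : x⁻¹ = x ^ i * x⁻¹ ^ (i + 1) := by group
  rw [he]
  exact (hatSubmonoid H).mul_mem ((hatSubmonoid H).pow_mem hx i) (mem_hatH_of_mem hxj)

lemma exists_mul_inv_pow_mem_notMem_succ {x z : G} (hz : z ∈ H) (hx : x⁻¹ ∉ hatH H) :
    ∃ j : ℕ, z * x⁻¹ ^ j ∈ H ∧ z * x⁻¹ ^ (j + 1) ∉ H := by
  by_contra! hall
  exact hx ⟨z, hz, fun n => Nat.rec (by simpa using hz) (fun j hj => hall j hj) n⟩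

end CompleteIntegralClosure

section Primary

variable {G : Type*} [CommGroup G] {H : Submonoid G}

lemma IsStronglyPrimary.isPrimaryMonoid (hsp : IsStronglyPrimary H) : IsPrimaryMonoid H := by
  refine ⟨hsp.1, fun a ha b hb => ?_⟩
  obtain ⟨n, hn, hsub⟩ := hsp.2 a ha
  exact ⟨n, hn, hsub (Set.pow_mem_pow hb)⟩

lemma IsPrimaryMonoid.inv_notMem_hatH (hp : IsPrimaryMonoid H) {a : G}
    (ha : a ∈ nonUnits H) : a⁻¹ ∉ hatH H := by
  rintro ⟨d, hd, hda⟩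
  by_cases hdu : d⁻¹ ∈ H
  · exact ha.2 (by simpa using mul_mem hdu (hda 1))
  obtain ⟨N, -, h, hh, hdh : d * h = a ^ N⟩ := hp.2 d ⟨hd, hdu⟩ a ha
  have he : h * (d * a⁻¹ ^ (N + 1)) = a⁻¹ :=
    calc h * (d * a⁻¹ ^ (N + 1)) = d * h * a⁻¹ ^ N * a⁻¹ := by rw [pow_succ]; ac_rfl
      _ = a⁻¹ := by rw [hdh, inv_pow, mul_inv_cancel, one_mul]
  exact ha.2 (he ▸ mul_mem hh (hda (N + 1)))

lemma hatPrimary_of_forall_pow_mem_nonUnits (hp : IsPrimaryMonoid H)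
    (hpow : ∀ x ∈ hatNonUnits H, ∃ k : ℕ, 0 < k ∧ x ^ k ∈ nonUnits H) : HatPrimary H := by
  obtain ⟨a₀, ha₀⟩ := hp.1
  refine ⟨⟨a₀, mem_hatH_of_mem ha₀.1, hp.inv_notMem_hatH ha₀⟩, fun a ha b hb => ?_⟩
  obtain ⟨l, hl, hal⟩ := hpow a ha
  obtain ⟨k, hk, hbk⟩ := hpow b hb
  obtain ⟨N, hN, h, hh, hbh : a ^ l * h = (b ^ k) ^ N⟩ := hp.2 _ hal _ hbk
  obtain ⟨i, rfl⟩ := Nat.exists_eq_add_one_of_ne_zero hl.ne'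
  refine ⟨k * N, Nat.mul_pos hk hN, a ^ i * h,
    (hatSubmonoid H).mul_mem ((hatSubmonoid H).pow_mem ha.1 i) (mem_hatH_of_mem hh), ?_⟩
  rw [pow_mul, ← hbh, pow_succ', mul_assoc]

end Primary

section LambdaInfinite

variable {G : Type*} [CommGroup G] {H : Submonoid G}

lemma exists_mem_lengthSet_le_add {c x : G} {n₁ n₂ : ℕ} (hc : ∀ n : ℕ, c * x ^ n ∈ H)
    (hx : x⁻¹ ∉ hatH H) (hpow : ∀ k, 0 < k → x ^ k ∉ H)
    (hn₁ : nonUnits H ^ n₁ ⊆ c • (H : Set G)) (hn₂ : nonUnits H ^ n₂ ⊆ (c * x) • (H : Set G))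
    {y : G} (hy : y ∈ H) : ∃ k ∈ lengthSet H y, k ≤ n₁ + n₂ := by
  by_cases hyc : y ∉ c • (H : Set G)
  · obtain ⟨k, hk, hkn⟩ :=
      exists_mem_lengthSet_le hy fun k hk => le_of_mem_pow_of_notMem_smul hn₁ hk hyc
    exact ⟨k, hk, by omega⟩
  obtain ⟨z, hz, rfl : c * z = y⟩ := not_not.mp hyc
  obtain ⟨j, hj, hj₁⟩ := exists_mul_inv_pow_mem_notMem_succ hz hx
  have hw : ∀ k, c * x ^ j ∈ nonUnits H ^ k → k ≤ n₁ := by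
    intro k hk
    rcases j.eq_zero_or_pos with rfl | hj₀
    · exact le_of_self_mem_pow hn₁ (by simpa using hk)
    refine le_of_mem_pow_of_notMem_smul hn₁ hk fun ⟨h, hh, he⟩ => hpow j hj₀ ?_
    rwa [← mul_left_cancel (he : c * h = c * x ^ j)]
  have hu : ∀ k, z * x⁻¹ ^ j ∈ nonUnits H ^ k → k ≤ n₂ := by
    refine fun k hk => le_of_mem_pow_of_notMem_smul hn₂ hk fun hzc => hj₁ ?_
    obtain ⟨h, hh, he : c * x * h = z * x⁻¹ ^ j⟩ := hzc
    have he' : z * x⁻¹ ^ (j + 1) = c * h := by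
      rw [pow_succ, ← mul_assoc, ← he, mul_right_comm, mul_inv_cancel_right]
    exact he' ▸ mul_mem (by simpa using hc 0) hh
  obtain ⟨k₁, hk₁, hk₁n⟩ := exists_mem_lengthSet_le (hc j) hw
  obtain ⟨k₂, hk₂, hk₂n⟩ := exists_mem_lengthSet_le hj hu
  have hcz : c * z = c * x ^ j * (z * x⁻¹ ^ j) := by
    rw [mul_mul_mul_comm, ← mul_pow, mul_inv_cancel, one_pow, mul_one]
  exact ⟨k₁ + k₂, hcz ▸ add_mem_lengthSet_mul hk₁ hk₂, by omega⟩

lemma Lambda_ne_top_of_forall_pow_notMem (hsp : IsStronglyPrimary H) {c x : G}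
    (hc : ∀ n : ℕ, c * x ^ n ∈ H) (hx : x⁻¹ ∉ hatH H) (hpow : ∀ k, 0 < k → x ^ k ∉ H) :
    Lambda H (H : Set G) ≠ ⊤ := by
  have hcH : c ∈ H := by simpa using hc 0
  have hcm : c ∈ nonUnits H :=
    ⟨hcH, fun hc' => hpow 1 one_pos (by simpa using mul_mem hc' (hc 1))⟩
  have hcxm : c * x ∈ nonUnits H :=
    ⟨by simpa using hc 1, fun hcx => hx (mem_hatH_of_mem (by simpa using mul_mem hcx hcH))⟩
  obtain ⟨n₁, -, hn₁⟩ := hsp.2 c hcm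
  obtain ⟨n₂, -, hn₂⟩ := hsp.2 (c * x) hcxm
  exact ne_top_of_le_ne_top (ENat.natCast_ne_top (n₁ + n₂))
    (Lambda_le fun y hy => exists_mem_lengthSet_le_add hc hx hpow hn₁ hn₂ hy)

lemma exists_pow_mem_nonUnits (hsp : IsStronglyPrimary H) (hL : Lambda H (H : Set G) = ⊤) :
    ∀ x ∈ hatNonUnits H, ∃ k : ℕ, 0 < k ∧ x ^ k ∈ nonUnits H := by
  rintro x ⟨hxH, hx⟩
  obtain ⟨k, hk, hxk⟩ : ∃ k, 0 < k ∧ x ^ k ∈ H := by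
    by_contra! hpow
    obtain ⟨c, -, hc⟩ := hxH
    exact Lambda_ne_top_of_forall_pow_notMem hsp hc hx hpow hL
  exact ⟨k, hk, hxk, fun hxk' => hx (inv_mem_hatH_of_inv_pow_mem hxH hk (by rwa [inv_pow]))⟩

end LambdaInfinite

theorem stmt17_general {G : Type*} [CommGroup G] (H : Submonoid G)
    (hsp : IsStronglyPrimary H) (hL : Lambda H (H : Set G) = ⊤) :
    (∀ x ∈ hatNonUnits H, ∃ k : ℕ, 0 < k ∧ x ^ k ∈ nonUnits H) ∧ HatPrimary H :=
  ⟨exists_pow_mem_nonUnits hsp hL,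
    hatPrimary_of_forall_pow_mem_nonUnits hsp.isPrimaryMonoid (exists_pow_mem_nonUnits hsp hL)⟩

/-- Let `H` be a strongly primary monoid with `Λ(H) = ∞`. Then every
element of `n = Ĥ \\ Ĥ^×` has a power lying in `m`, and consequently `Ĥ` is primary. -/
theorem stmt17 {G : Type*} [CommGroup G] (H : Submonoid G) (hq : IsQuotientGroup H)
    (hsp : IsStronglyPrimary H) (hL : Lambda H (H : Set G) = ⊤) :
    (∀ x ∈ hatNonUnits H, ∃ k : ℕ, 0 < k ∧ x ^ k ∈ nonUnits H) ∧ HatPrimary H :=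
  stmt17_general H hsp hL
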